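/- arXiv:1712.07086 — 2 statements merged into one kernel-verified Lean document; each statement's English description precedes it below -/
import Mathlib

section
/- Let G be a finite connected full substar graph with host tree T and intersection model {S_x}_{x ∈ V(G)}, and let X be any node of T. If lpt(G) > 1 (i.e., no single vertex of G lies on all longest paths), then there exist a longest path P of G and a node Y ∈ N_T(X) such that every vertex of P has its star centered at a node lying in the connected component of T − X that contains Y (i.e., V(P) ⊆ C^X_Y). -/
open SimpleGraph

/-- `p` is a longest path of `G`: it is a path, and no path of `G` is longer. -/
def IsLongestPath {V : Type*} (G : SimpleGraph V) {u v : V} (p : G.Walk u v) : Prop :=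
  p.IsPath ∧ ∀ ⦃a b : V⦄ (q : G.Walk a b), q.IsPath → q.length ≤ p.length

/-- An intersection model of `G` by full substars of a tree `T`: each vertex `x` of `G`
is assigned a full substar of `T` with center `center x` and leaf set `leaves x`, where
`leaves x` is a set of neighbors of `center x` in `T` of cardinality at least
`d_T(center x) - 1`; two distinct vertices of `G` are adjacent iff the vertex sets
`{center x} ∪ leaves x` of their substars intersect. -/
structure SubstarModel {V τ : Type*} (G : SimpleGraph V) (T : SimpleGraph τ) where
  isTree : T.IsTree
  center : V → τ
  leaves : V → Set τ
  leaves_sub : ∀ x : V, leaves x ⊆ T.neighborSet (center x)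
  leaves_card : ∀ x : V, (T.neighborSet (center x)).ncard - 1 ≤ (leaves x).ncard
  adj_iff : ∀ x y : V, G.Adj x y ↔ x ≠ y ∧
    ((insert (center x) (leaves x) : Set τ) ∩ insert (center y) (leaves y)).Nonempty

/-!
Every vertex of `G` is missed by some longest path, and the vertices whose stars contain `X`
form a clique `K`. If a longest path `P` misses a vertex of `K`, no two consecutive vertices
of `P` have stars containing `X` (the missed vertex could be inserted between them), so
consecutive vertices share a node of `T` other than `X`; if moreover no vertex of `P` is
centered at `X`, all centers of `P` lie in one component of `T - X`.

Such a `P` exists: if `K` is empty any longest path works; if no vertex is centered at `X`,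
take one missing a vertex of `K`; if some `v` centered at `X` has the full star, take one
missing `v`, since a vertex of `P` centered at `X` would have a path-neighbour adjacent to
`v`. Otherwise each `w` centered at `X` misses exactly one neighbour `m_w` of `X`. A longest
path missing `w` then contains at most one vertex `u` centered at `X` (two of them would let
us reroute through `w`), its other vertices lie in the branch of `m_w`, and `m_w ∈ S_u`.
A path `P₁ ∋ u₁` missing `w` and a path `P₂ ∋ u₂` missing `u₁` would thus live in the
different branches of `m_w` and `m_{u₁}` apart from `u₁, u₂`, so they would be disjoint
longest paths joined by the edge `u₁u₂`, which is impossible.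
-/

namespace SimpleGraph

variable {V : Type*} {G : SimpleGraph V}

/-- Longest paths as vertex lists, which are easier to cut and splice than walks. -/
structure IsLongestPathList (G : SimpleGraph V) (l : List V) : Prop where
  ne_nil : l ≠ []
  isChain : l.IsChain G.Adj
  nodup : l.Nodup
  length_le : ∀ ⦃l' : List V⦄, l'.IsChain G.Adj → l'.Nodup → l'.length ≤ l.length

theorem IsLongestPath.isLongestPathList_support {u v : V} {p : G.Walk u v}
    (hp : IsLongestPath G p) : IsLongestPathList G p.support where
  ne_nil := p.support_ne_nil
  isChain := p.isChain_adj_support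
  nodup := hp.1.support_nodup
  length_le l' hchain hnodup := by
    cases l' with
    | nil => simp
    | cons x t =>
      have := hp.2 (Walk.ofSupport _ (List.cons_ne_nil x t) hchain)
        ((Walk.isPath_def _).2 (by rwa [Walk.support_ofSupport]))
      simp only [Walk.length_ofSupport, List.length_cons, Walk.length_support] at this ⊢
      omega

theorem exists_half_path_ending_at {l : List V} (hchain : l.IsChain G.Adj) (hnodup : l.Nodup)
    {x : V} (hx : x ∈ l) : ∃ α : List V, α.IsChain G.Adj ∧ α.Nodup ∧ α ⊆ l ∧
      α.getLast? = some x ∧ l.length < 2 * α.length := by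
  obtain ⟨a, b, rfl⟩ := List.append_of_mem hx
  rcases le_total b.length a.length with h | h
  · have hinf : (a ++ [x]) <:+: a ++ x :: b := ⟨[], b, by simp⟩
    exact ⟨a ++ [x], hchain.infix hinf, hnodup.sublist hinf.sublist, hinf.subset, by simp,
      by simp; omega⟩
  · have hinf : (x :: b) <:+: a ++ x :: b := ⟨a, [], by simp⟩
    refine ⟨(x :: b).reverse, List.isChain_reverse.2 ((hchain.infix hinf).imp fun _ _ h => h.symm),
      List.nodup_reverse.2 (hnodup.sublist hinf.sublist), fun z hz => hinf.subset
      (List.mem_reverse.1 hz), by simp [List.getLast?_reverse], by simp; omega⟩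

namespace IsLongestPathList

variable {l : List V} {v : V}

theorem exists_isLongestPath_support_eq (hl : IsLongestPathList G l) :
    ∃ (a b : V) (p : G.Walk a b), IsLongestPath G p ∧ p.support = l := by
  refine ⟨_, _, Walk.ofSupport l hl.ne_nil hl.isChain, ⟨?_, fun a b q hq => ?_⟩,
    Walk.support_ofSupport _ _⟩
  · rw [Walk.isPath_def, Walk.support_ofSupport]
    exact hl.nodup
  · have := hl.length_le q.isChain_adj_support hq.support_nodup
    simp only [Walk.length_support, Walk.length_ofSupport] at this ⊢
    omega

theorem not_isChain_of_perm (hl : IsLongestPathList G l) (hv : v ∉ l) {l' : List V}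
    (hperm : l'.Perm (v :: l)) : ¬ l'.IsChain G.Adj := fun hchain => by
  have := hl.length_le hchain (hperm.nodup_iff.2 (List.nodup_cons.2 ⟨hv, hl.nodup⟩))
  rw [hperm.length_eq, List.length_cons] at this
  omega

theorem isChain_not_adj_and_adj (hl : IsLongestPathList G l) (hv : v ∉ l) :
    l.IsChain fun x y => ¬(G.Adj v x ∧ G.Adj v y) := by
  refine List.isChain_iff_forall_rel_of_append_cons_cons.2 fun x y s t hst ⟨hvx, hvy⟩ => ?_
  refine hl.not_isChain_of_perm hv (l' := s ++ x :: v :: y :: t)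
    (by simpa [hst] using List.perm_middle (l₁ := s ++ [x]) (l₂ := y :: t) (a := v)) ?_
  have := hl.isChain
  rw [hst, List.isChain_append_cons_cons] at this
  rw [List.isChain_append_cons_cons, List.isChain_cons_cons]
  exact ⟨this.1, hvx.symm, hvy, this.2.2⟩

theorem not_adj_of_eq_cons (hl : IsLongestPathList G l) (hv : v ∉ l) {x : V} {t : List V}
    (hxt : l = x :: t) : ¬ G.Adj v x := fun hvx => by
  subst hxt
  exact hl.not_isChain_of_perm hv (List.Perm.refl _) (hl.isChain.cons_cons hvx)

theorem not_adj_of_eq_concat (hl : IsLongestPathList G l) (hv : v ∉ l) {x : V} {s : List V}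
    (hsx : l = s ++ [x]) : ¬ G.Adj v x := fun hvx =>
  hl.not_isChain_of_perm hv (List.perm_append_singleton v l)
    (hl.isChain.append (List.isChain_singleton v) (by simp [hsx, hvx.symm]))

theorem exists_eq_append_cons_cons_cons (hl : IsLongestPathList G l) (hv : v ∉ l) {z : V}
    (hz : z ∈ l) (hvz : G.Adj v z) :
    ∃ s p q t, l = s ++ p :: z :: q :: t ∧ ¬ G.Adj v p ∧ ¬ G.Adj v q := by
  obtain ⟨s₁, s₂, rfl⟩ := List.append_of_mem hz
  obtain rfl | ⟨s, p, hs⟩ := s₁.eq_nil_or_concat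
  · exact (hl.not_adj_of_eq_cons hv rfl hvz).elim
  rw [List.concat_eq_append] at hs
  subst hs
  obtain _ | ⟨q, t⟩ := s₂
  · exact (hl.not_adj_of_eq_concat hv rfl hvz).elim
  have hchain := List.isChain_iff_forall_rel_of_append_cons_cons.1 (hl.isChain_not_adj_and_adj hv)
  refine ⟨s, p, q, t, by simp, fun hvp => hchain (l₁ := s) (l₂ := q :: t) (by simp) ⟨hvp, hvz⟩,
    fun hvq => hchain (l₁ := s ++ [p]) (l₂ := t) (by simp) ⟨hvz, hvq⟩⟩

/-- Otherwise `a ++ z₁ :: w :: z₂ :: (q₁ :: b).reverse ++ q₂ :: c` would be a longer path. -/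
theorem not_adj_of_eq_append_cons_cons (hl : IsLongestPathList G l) {w : V} (hw : w ∉ l)
    {a b c : List V} {z₁ q₁ z₂ q₂ : V} (hl_eq : l = a ++ z₁ :: q₁ :: b ++ z₂ :: q₂ :: c)
    (hwz₁ : G.Adj w z₁) (hwz₂ : G.Adj w z₂) : ¬ G.Adj q₁ q₂ := by
  classical
  intro hq
  refine hl.not_isChain_of_perm hw
    (l' := a ++ [z₁] ++ w :: ((q₁ :: b ++ [z₂]).reverse ++ q₂ :: c)) ?_ ?_
  · rw [hl_eq]
    exact List.perm_iff_count.2 fun x => by simp [List.count_cons]; omega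
  have hpre : (a ++ [z₁]).IsChain G.Adj :=
    hl.isChain.infix ⟨[], q₁ :: b ++ z₂ :: q₂ :: c, by simp [hl_eq]⟩
  have hmid : (q₁ :: b ++ [z₂]).IsChain G.Adj :=
    hl.isChain.infix ⟨a ++ [z₁], q₂ :: c, by simp [hl_eq]⟩
  have hpost : (q₂ :: c).IsChain G.Adj :=
    hl.isChain.infix ⟨a ++ z₁ :: q₁ :: b ++ [z₂], [], by simp [hl_eq]⟩
  have hrev : (q₁ :: b ++ [z₂]).reverse.IsChain G.Adj :=
    List.isChain_reverse.2 (hmid.imp fun _ _ h => h.symm)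
  refine hpre.append ((hrev.append hpost ?_).cons ?_) ?_
  · rw [List.getLast?_reverse]
    simpa using hq
  · simpa using hwz₂
  · simpa using hwz₁.symm

theorem not_adj_of_disjoint {l₁ l₂ : List V} (hl₁ : IsLongestPathList G l₁)
    (hl₂ : IsLongestPathList G l₂) (hdisj : l₁.Disjoint l₂) {x y : V} (hx : x ∈ l₁)
    (hy : y ∈ l₂) : ¬ G.Adj x y := by
  intro hxy
  obtain ⟨α, hα, hαn, hαl, hαx, hαlen⟩ := exists_half_path_ending_at hl₁.isChain hl₁.nodup hx
  obtain ⟨β, hβ, hβn, hβl, hβy, hβlen⟩ := exists_half_path_ending_at hl₂.isChain hl₂.nodup hy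
  have hchain : (α ++ β.reverse).IsChain G.Adj :=
    hα.append (List.isChain_reverse.2 (hβ.imp fun _ _ h => h.symm))
      (by simp [hαx, List.head?_reverse, hβy, hxy])
  have hnodup : (α ++ β.reverse).Nodup :=
    List.nodup_append'.2 ⟨hαn, List.nodup_reverse.2 hβn,
      fun z hzα hzβ => hdisj (hαl hzα) (hβl (List.mem_reverse.1 hzβ))⟩
  have h₁ := hl₁.length_le hchain hnodup
  have h₂ := hl₁.length_le hl₂.isChain hl₂.nodup
  have h₃ := hl₂.length_le hl₁.isChain hl₁.nodup
  rw [List.length_append, List.length_reverse] at h₁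
  omega

end IsLongestPathList

variable {τ : Type*} {T : SimpleGraph τ} {X : τ}

/-- `a` and `b` lie in the same component of `T - X`; in particular `a ≠ X` and `b ≠ X`. -/
def SameBranch (T : SimpleGraph τ) (X a b : τ) : Prop :=
  ∃ w : T.Walk a b, X ∉ w.support

namespace SameBranch

variable {a b c : τ}

theorem right_ne (h : SameBranch T X a b) : b ≠ X := by
  rintro rfl
  obtain ⟨w, hw⟩ := h
  exact hw w.end_mem_support

theorem refl (ha : a ≠ X) : SameBranch T X a a :=
  ⟨Walk.nil, by simpa using ha.symm⟩

theorem symm (h : SameBranch T X a b) : SameBranch T X b a := by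
  obtain ⟨w, hw⟩ := h
  exact ⟨w.reverse, by simpa using hw⟩

theorem trans (h₁ : SameBranch T X a b) (h₂ : SameBranch T X b c) : SameBranch T X a c := by
  obtain ⟨w₁, hw₁⟩ := h₁
  obtain ⟨w₂, hw₂⟩ := h₂
  exact ⟨w₁.append w₂, by simp [Walk.mem_support_append_iff, hw₁, hw₂]⟩

theorem of_adj (ha : a ≠ X) (hb : b ≠ X) (h : T.Adj a b) : SameBranch T X a b :=
  ⟨Walk.cons h Walk.nil, by simp [ha.symm, hb.symm]⟩

end SameBranch

theorem Preconnected.exists_adj_sameBranch (hT : T.Preconnected) {c : τ} (hc : c ≠ X) :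
    ∃ Y, T.Adj X Y ∧ SameBranch T X Y c := by
  classical
  obtain ⟨w⟩ := hT X c
  obtain ⟨Y, hXY, p, hp⟩ := Walk.exists_eq_cons_of_ne hc.symm (w.toPath : T.Walk X c)
  have hpath := w.toPath.2
  rw [hp, Walk.cons_isPath_iff] at hpath
  exact ⟨Y, hXY, p, hpath.2⟩

theorem IsTree.not_sameBranch (hT : T.IsTree) {m₀ m₁ : τ} (h₀ : T.Adj X m₀) (h₁ : T.Adj X m₁)
    (hne : m₀ ≠ m₁) : ¬ SameBranch T X m₀ m₁ := by
  classical
  rintro ⟨w, hw⟩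
  have hpath : (Walk.cons h₀.symm (Walk.cons h₁ Walk.nil)).IsPath := by
    simp [Walk.isPath_def, h₀.ne', hne, h₁.ne]
  have h := congrArg (fun p : T.Path m₀ m₁ => (p : T.Walk m₀ m₁).support)
    ((hT.isAcyclic.subsingleton_path m₀ m₁).elim w.toPath ⟨_, hpath⟩)
  exact hw (w.support_toPath_subset_support (by simp [h]))

end SimpleGraph

namespace SubstarModel

variable {V τ : Type*} {G : SimpleGraph V} {T : SimpleGraph τ} (M : SubstarModel G T)
  {X : τ} {l : List V}

def star (x : V) : Set τ := insert (M.center x) (M.leaves x)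

theorem center_mem_star (x : V) : M.center x ∈ M.star x :=
  Set.mem_insert _ _

theorem eq_or_adj_of_mem_star {x : V} {t : τ} (ht : t ∈ M.star x) :
    t = M.center x ∨ T.Adj (M.center x) t :=
  ht.imp id fun h => M.leaves_sub x h

theorem adj_of_mem_star {x y : V} {t : τ} (hx : t ∈ M.star x) (hy : t ∈ M.star y)
    (hxy : x ≠ y) : G.Adj x y :=
  (M.adj_iff x y).2 ⟨hxy, t, hx, hy⟩

theorem exists_mem_star_of_adj {x y : V} (h : G.Adj x y) : ∃ t, t ∈ M.star x ∧ t ∈ M.star y :=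
  ((M.adj_iff x y).1 h).2

theorem sameBranch_of_mem_star {x : V} {t : τ} (ht : t ∈ M.star x) (htX : t ≠ X)
    (hx : M.center x ≠ X) : T.SameBranch X (M.center x) t := by
  rcases M.eq_or_adj_of_mem_star ht with rfl | hadj
  · exact .refl hx
  · exact .of_adj hx htX hadj

theorem sameBranch_center_of_adj {x y : V} (h : G.Adj x y) (hX : ¬(X ∈ M.star x ∧ X ∈ M.star y))
    (hx : M.center x ≠ X) (hy : M.center y ≠ X) :
    T.SameBranch X (M.center x) (M.center y) := by
  obtain ⟨t, htx, hty⟩ := M.exists_mem_star_of_adj h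
  have htX : t ≠ X := by
    rintro rfl
    exact hX ⟨htx, hty⟩
  exact (M.sameBranch_of_mem_star htx htX hx).trans (M.sameBranch_of_mem_star hty htX hy).symm

theorem sameBranch_center_of_isChain (hadj : l.IsChain G.Adj)
    (hX : l.IsChain fun x y => ¬(X ∈ M.star x ∧ X ∈ M.star y)) (hc : ∀ z ∈ l, M.center z ≠ X) :
    ∀ x ∈ l, ∀ y ∈ l, T.SameBranch X (M.center x) (M.center y) := by
  have hchain : l.IsChain fun x y => T.SameBranch X (M.center x) (M.center y) := by
    refine List.isChain_iff_forall_rel_of_append_cons_cons.2 fun x y l₁ l₂ h => ?_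
    exact M.sameBranch_center_of_adj (List.isChain_iff_forall_rel_of_append_cons_cons.1 hadj h)
      (List.isChain_iff_forall_rel_of_append_cons_cons.1 hX h) (hc x (by simp [h]))
      (hc y (by simp [h]))
  obtain _ | ⟨x₀, t⟩ := l
  · simp
  have hhead : ∀ z ∈ x₀ :: t, T.SameBranch X (M.center x₀) (M.center z) :=
    hchain.induction _ _ (fun _ _ h₁ h₂ => h₂.trans h₁) fun _ => .refl (hc x₀ (by simp))
  exact fun x hx y hy => (hhead x hx).symm.trans (hhead y hy)

theorem isChain_not_mem_star_and_mem_star (hl : G.IsLongestPathList l) {v : V}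
    (hv : X ∈ M.star v) (hvl : v ∉ l) : l.IsChain fun x y => ¬(X ∈ M.star x ∧ X ∈ M.star y) :=
  (hl.isChain_not_adj_and_adj hvl).imp_of_mem_imp fun _ _ hx hy h ⟨hxX, hyX⟩ =>
    h ⟨M.adj_of_mem_star hv hxX (ne_of_mem_of_not_mem hx hvl).symm,
      M.adj_of_mem_star hv hyX (ne_of_mem_of_not_mem hy hvl).symm⟩

theorem center_ne_of_neighborSet_subset_leaves (hl : G.IsLongestPathList l) {v z : V}
    (hvl : v ∉ l) (hv : M.center v = X) (hfull : T.neighborSet X ⊆ M.leaves v) (hz : z ∈ l) :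
    M.center z ≠ X := by
  intro hzX
  have hstar : M.star z ⊆ M.star v := fun t ht => by
    rcases M.eq_or_adj_of_mem_star ht with rfl | hadj
    · exact hzX ▸ hv ▸ M.center_mem_star v
    · exact Set.mem_insert_of_mem _ (hfull (hzX ▸ hadj))
  have hvz : G.Adj v z :=
    M.adj_of_mem_star (hstar (M.center_mem_star z)) (M.center_mem_star z)
      (ne_of_mem_of_not_mem hz hvl).symm
  obtain ⟨s, p, q, s', rfl, -, hvq⟩ := hl.exists_eq_append_cons_cons_cons hvl hz hvz
  have hzq : G.Adj z q :=
    List.isChain_iff_forall_rel_of_append_cons_cons.1 hl.isChain (l₁ := s ++ [p]) (l₂ := s')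
      (by simp)
  obtain ⟨t, htz, htq⟩ := M.exists_mem_star_of_adj hzq
  exact hvq (M.adj_of_mem_star (hstar htz) htq (fun h => hvl (by simp [h])))

theorem exists_star_eq_of_not_subset [Finite τ] {w : V} (hw : M.center w = X)
    (hnf : ¬ T.neighborSet X ⊆ M.leaves w) :
    ∃ m, T.Adj X m ∧ M.star w = insert X (T.neighborSet X \ {m}) := by
  obtain ⟨m, hmN, hm⟩ := Set.not_subset.1 hnf
  have hsub : M.leaves w ⊆ T.neighborSet X \ {m} := fun t ht =>
    ⟨hw ▸ M.leaves_sub w ht, fun htm => hm (htm ▸ ht)⟩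
  have hcard := M.leaves_card w
  rw [hw] at hcard
  have heq := Set.eq_of_subset_of_ncard_le hsub
    (by rw [Set.ncard_sdiff_singleton_of_mem hmN]; exact hcard) (Set.toFinite _)
  exact ⟨m, hmN, by rw [star, hw, heq]⟩

theorem mem_star_of_adj_of_not_adj {w z p : V} {m : τ}
    (hw : M.star w = insert X (T.neighborSet X \ {m})) (hz : M.center z = X) (hpz : G.Adj p z)
    (hwp : ¬ G.Adj w p) (hpw : p ≠ w) : m ∈ M.star p ∧ m ∈ M.star z := by
  obtain ⟨t, htp, htz⟩ := M.exists_mem_star_of_adj hpz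
  have htw : t ∉ M.star w := fun htw => hwp (M.adj_of_mem_star htw htp hpw.symm)
  rw [hw] at htw
  rcases M.eq_or_adj_of_mem_star htz with rfl | hadj
  · exact (htw (hz ▸ Set.mem_insert _ _)).elim
  · obtain rfl : t = m := by
      by_contra htm
      exact htw (Set.mem_insert_of_mem _ ⟨hz ▸ hadj, htm⟩)
    exact ⟨htp, htz⟩

theorem ne_append_cons_append_cons (hl : G.IsLongestPathList l) {w z₁ z₂ : V} {m : τ}
    (hw : M.star w = insert X (T.neighborSet X \ {m})) (hwl : w ∉ l) (h₁ : M.center z₁ = X)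
    (h₂ : M.center z₂ = X) (a b c : List V) : l ≠ a ++ z₁ :: b ++ z₂ :: c := by
  intro hl_eq
  have hXw : X ∈ M.star w := hw ▸ Set.mem_insert _ _
  have hwz₁ : G.Adj w z₁ := M.adj_of_mem_star hXw (h₁ ▸ M.center_mem_star z₁)
    fun h => hwl (by simp [hl_eq, h])
  have hwz₂ : G.Adj w z₂ := M.adj_of_mem_star hXw (h₂ ▸ M.center_mem_star z₂)
    fun h => hwl (by simp [hl_eq, h])
  have hrel := List.isChain_iff_forall_rel_of_append_cons_cons.1 hl.isChain
  have hnot := List.isChain_iff_forall_rel_of_append_cons_cons.1 (hl.isChain_not_adj_and_adj hwl)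
  obtain _ | ⟨q₁, b⟩ := b
  · exact hnot (l₁ := a) (l₂ := c) (by simp [hl_eq]) ⟨hwz₁, hwz₂⟩
  obtain _ | ⟨q₂, c⟩ := c
  · exact hl.not_adj_of_eq_concat hwl hl_eq hwz₂
  have hwq₁ : ¬ G.Adj w q₁ := fun h => hnot (l₁ := a) (l₂ := b ++ z₂ :: q₂ :: c)
    (by simp [hl_eq]) ⟨hwz₁, h⟩
  have hwq₂ : ¬ G.Adj w q₂ := fun h => hnot (l₁ := a ++ z₁ :: q₁ :: b) (l₂ := c)
    (by simp [hl_eq]) ⟨hwz₂, h⟩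
  have hm₁ := M.mem_star_of_adj_of_not_adj hw h₁
    (hrel (l₁ := a) (l₂ := b ++ z₂ :: q₂ :: c) (by simp [hl_eq])).symm hwq₁
    fun h => hwl (by simp [hl_eq, h])
  have hm₂ := M.mem_star_of_adj_of_not_adj hw h₂
    (hrel (l₁ := a ++ z₁ :: q₁ :: b) (l₂ := c) (by simp [hl_eq])).symm hwq₂
    fun h => hwl (by simp [hl_eq, h])
  have hq : q₁ ≠ q₂ := by
    rintro rfl
    simpa [hl_eq, List.nodup_append] using hl.nodup
  exact hl.not_adj_of_eq_append_cons_cons hwl hl_eq hwz₁ hwz₂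
    (M.adj_of_mem_star hm₁.1 hm₂.1 hq)

theorem eq_of_center_eq (hl : G.IsLongestPathList l) {w z₁ z₂ : V} {m : τ}
    (hw : M.star w = insert X (T.neighborSet X \ {m})) (hwl : w ∉ l) (hz₁ : z₁ ∈ l)
    (hz₂ : z₂ ∈ l) (h₁ : M.center z₁ = X) (h₂ : M.center z₂ = X) : z₁ = z₂ := by
  by_contra hne
  obtain ⟨s, t, rfl⟩ := List.append_of_mem hz₁
  rcases List.mem_append.1 hz₂ with hs | ht
  · obtain ⟨s₁, s₂, rfl⟩ := List.append_of_mem hs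
    exact M.ne_append_cons_append_cons hl hw hwl h₂ h₁ s₁ s₂ t (by simp)
  · obtain rfl | ht := List.mem_cons.1 ht
    · exact hne rfl
    obtain ⟨t₁, t₂, rfl⟩ := List.append_of_mem ht
    exact M.ne_append_cons_append_cons hl hw hwl h₁ h₂ s t₁ t₂ (by simp)

theorem sameBranch_of_center_eq (hl : G.IsLongestPathList l) {w u : V} {m : τ}
    (hw : M.star w = insert X (T.neighborSet X \ {m})) (hm : T.Adj X m) (hwl : w ∉ l)
    (hu : u ∈ l) (huX : M.center u = X) :
    m ∈ M.star u ∧ ∀ z ∈ l, z ≠ u → T.SameBranch X m (M.center z) := by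
  have hXw : X ∈ M.star w := hw ▸ Set.mem_insert _ _
  have hwu : G.Adj w u :=
    M.adj_of_mem_star hXw (huX ▸ M.center_mem_star u) (ne_of_mem_of_not_mem hu hwl).symm
  have hside : ∀ seg, seg <:+: l → u ∉ seg → ∀ y ∈ seg, m ∈ M.star y →
      ∀ z ∈ seg, T.SameBranch X m (M.center z) := by
    intro seg hseg hus y hy hmy z hz
    have hc : ∀ z ∈ seg, M.center z ≠ X := fun z hz hzX =>
      hus (M.eq_of_center_eq hl hw hwl (hseg.subset hz) hu hzX huX ▸ hz)
    exact (M.sameBranch_of_mem_star hmy hm.ne' (hc y hy)).symm.trans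
      (M.sameBranch_center_of_isChain (hl.isChain.infix hseg)
        ((M.isChain_not_mem_star_and_mem_star hl hXw hwl).infix hseg) hc y hy z hz)
  obtain ⟨s, p, q, t, rfl, hwp, hwq⟩ := hl.exists_eq_append_cons_cons_cons hwl hu hwu
  have hrel := List.isChain_iff_forall_rel_of_append_cons_cons.1 hl.isChain
  obtain ⟨hmp, hmu⟩ := M.mem_star_of_adj_of_not_adj hw huX
    (hrel (l₁ := s) (l₂ := q :: t) (by simp)) hwp fun h => hwl (by simp [h])
  obtain ⟨hmq, -⟩ := M.mem_star_of_adj_of_not_adj hw huX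
    (hrel (l₁ := s ++ [p]) (l₂ := t) (by simp)).symm hwq fun h => hwl (by simp [h])
  have hnodup := hl.nodup
  simp only [List.nodup_append, List.nodup_cons, List.mem_cons] at hnodup
  refine ⟨hmu, fun z hz hzu => ?_⟩
  have hus : u ∉ s ++ [p] := by grind
  have hut : u ∉ q :: t := by grind
  rcases (by simp at hz ⊢; tauto : z ∈ s ++ [p] ∨ z ∈ q :: t) with hz | hz
  · exact hside _ ⟨[], u :: q :: t, by simp⟩ hus p (by simp) hmp z hz
  · exact hside _ ⟨s ++ [p, u], [], by simp⟩ hut q (by simp) hmq z hz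

theorem exists_not_mem_of_forall_not_subset [Finite τ]
    (havoid : ∀ x, ∃ l, G.IsLongestPathList l ∧ x ∉ l) {w₀ : V} (hw₀ : M.center w₀ = X)
    (hnf : ∀ w, M.center w = X → ¬ T.neighborSet X ⊆ M.leaves w) :
    ∃ v l, X ∈ M.star v ∧ G.IsLongestPathList l ∧ v ∉ l ∧ ∀ z ∈ l, M.center z ≠ X := by
  by_contra! h
  obtain ⟨m₀, hm₀, hw₀star⟩ := M.exists_star_eq_of_not_subset hw₀ (hnf w₀ hw₀)
  obtain ⟨l₁, hl₁, hw₀l₁⟩ := havoid w₀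
  obtain ⟨u₁, hu₁l₁, hu₁⟩ := h w₀ l₁ (hw₀ ▸ M.center_mem_star w₀) hl₁ hw₀l₁
  obtain ⟨m₁, hm₁, hu₁star⟩ := M.exists_star_eq_of_not_subset hu₁ (hnf u₁ hu₁)
  obtain ⟨hm₀u₁, hbr₁⟩ := M.sameBranch_of_center_eq hl₁ hw₀star hm₀ hw₀l₁ hu₁l₁ hu₁
  obtain ⟨l₂, hl₂, hu₁l₂⟩ := havoid u₁
  obtain ⟨u₂, hu₂l₂, hu₂⟩ := h u₁ l₂ (hu₁ ▸ M.center_mem_star u₁) hl₂ hu₁l₂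
  obtain ⟨-, hbr₂⟩ := M.sameBranch_of_center_eq hl₂ hu₁star hm₁ hu₁l₂ hu₂l₂ hu₂
  have hm₀₁ : m₀ ≠ m₁ := by
    rintro rfl
    rw [hu₁star] at hm₀u₁
    simp [hm₀.ne'] at hm₀u₁
  have hdisj : l₁.Disjoint l₂ := fun z hz₁ hz₂ => by
    have h₁ := hbr₁ z hz₁ (ne_of_mem_of_not_mem hz₂ hu₁l₂)
    have h₂ := hbr₂ z hz₂ fun h => h₁.right_ne (h ▸ hu₂)
    exact M.isTree.not_sameBranch hm₀ hm₁ hm₀₁ (h₁.trans h₂.symm)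
  exact hl₁.not_adj_of_disjoint hl₂ hdisj hu₁l₁ hu₂l₂
    (M.adj_of_mem_star (hu₁ ▸ M.center_mem_star u₁) (hu₂ ▸ M.center_mem_star u₂)
      (ne_of_mem_of_not_mem hu₂l₂ hu₁l₂).symm)

theorem exists_isLongestPathList_center_ne [Finite τ] [Nonempty V]
    (havoid : ∀ x, ∃ l, G.IsLongestPathList l ∧ x ∉ l) :
    ∃ l, G.IsLongestPathList l ∧ (∀ z ∈ l, M.center z ≠ X) ∧
      l.IsChain fun x y => ¬(X ∈ M.star x ∧ X ∈ M.star y) := by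
  by_cases hK : ∃ v, X ∈ M.star v
  · suffices ∃ v l, X ∈ M.star v ∧ G.IsLongestPathList l ∧ v ∉ l ∧ ∀ z ∈ l, M.center z ≠ X by
      obtain ⟨v, l, hv, hl, hvl, hc⟩ := this
      exact ⟨l, hl, hc, M.isChain_not_mem_star_and_mem_star hl hv hvl⟩
    by_cases hA : ∃ w, M.center w = X
    · obtain ⟨w₀, hw₀⟩ := hA
      by_cases hfull : ∃ w, M.center w = X ∧ T.neighborSet X ⊆ M.leaves w
      · obtain ⟨w, hw, hwfull⟩ := hfull
        obtain ⟨l, hl, hwl⟩ := havoid w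
        exact ⟨w, l, hw ▸ M.center_mem_star w, hl, hwl,
          fun z hz => M.center_ne_of_neighborSet_subset_leaves hl hwl hw hwfull hz⟩
      · push Not at hfull
        exact M.exists_not_mem_of_forall_not_subset havoid hw₀ hfull
    · obtain ⟨v, hv⟩ := hK
      obtain ⟨l, hl, hvl⟩ := havoid v
      exact ⟨v, l, hv, hl, hvl, fun z _ hz => hA ⟨z, hz⟩⟩
  · obtain ⟨l, hl, -⟩ := havoid (Classical.arbitrary V)
    exact ⟨l, hl, fun z _ hz => hK ⟨z, hz ▸ M.center_mem_star z⟩,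
      hl.isChain.imp fun x _ _ h => hK ⟨x, h.1⟩⟩

end SubstarModel

theorem longest_path_in_one_branch_general {V τ : Type*} [Fintype τ]
    (G : SimpleGraph V) (T : SimpleGraph τ) (M : SubstarModel G T)
    (hconn : G.Connected) (X : τ)
    (hlpt : ¬ ∃ x : V, ∀ ⦃a b : V⦄ (p : G.Walk a b), IsLongestPath G p → x ∈ p.support) :
    ∃ Y : τ, T.Adj X Y ∧ ∃ (a b : V) (p : G.Walk a b), IsLongestPath G p ∧
      ∀ z ∈ p.support, ∃ w : T.Walk Y (M.center z), X ∉ w.support := by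
  have havoid : ∀ x, ∃ l, G.IsLongestPathList l ∧ x ∉ l := fun x => by
    push Not at hlpt
    obtain ⟨a, b, p, hp, hx⟩ := hlpt x
    exact ⟨p.support, hp.isLongestPathList_support, hx⟩
  have : Nonempty V := hconn.nonempty
  obtain ⟨l, hl, hc, hX⟩ := M.exists_isLongestPathList_center_ne havoid
  have hbranch := M.sameBranch_center_of_isChain hl.isChain hX hc
  obtain ⟨Y, hXY, hY⟩ :=
    M.isTree.connected.preconnected.exists_adj_sameBranch (hc _ (List.head_mem hl.ne_nil))
  obtain ⟨a, b, p, hp, rfl⟩ := hl.exists_isLongestPath_support_eq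
  exact ⟨Y, hXY, a, b, p, hp, fun z hz => hY.trans (hbranch _ (List.head_mem hl.ne_nil) z hz)⟩

/-- For a finite connected full substar graph `G` with host tree `T`, and any node `X`
of `T`: if no single vertex of `G` lies on all longest paths (`lpt(G) > 1`), then there
are a longest path `P` and a neighbor `Y` of `X` in `T` such that every vertex of `P`
has its substar centered at a node of the component of `T - X` containing `Y`
(witnessed by a walk in `T` from `Y` to the center avoiding `X`). -/
theorem longest_path_in_one_branch {V τ : Type*} [Fintype V] [Fintype τ]
    (G : SimpleGraph V) (T : SimpleGraph τ) (M : SubstarModel G T)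
    (hconn : G.Connected) (X : τ)
    (hlpt : ¬ ∃ x : V, ∀ ⦃a b : V⦄ (p : G.Walk a b), IsLongestPath G p → x ∈ p.support) :
    ∃ Y : τ, T.Adj X Y ∧ ∃ (a b : V) (p : G.Walk a b), IsLongestPath G p ∧
      ∀ z ∈ p.support, ∃ w : T.Walk Y (M.center z), X ∉ w.support :=
  longest_path_in_one_branch_general G T M hconn X hlpt
end

section
/- Let G be a finite full substar graph with host tree T and intersection model {S_x}_{x ∈ V(G)}. Let x ∈ V(G) with center c(x) = X, and let P be a longest path of G with x ∉ V(P). Then there exists a node Y ∈ N_T(X) such that: (i) V(P) ⊆ C^X_Y ∪ C_X; (ii) |V(P) ∩ C_X| ≤ 1; and moreover, if |V(P) ∩ C_X| = 1, then Y ∉ V(S_x). -/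
open SimpleGraph

/-!
Substars sharing a node give adjacent vertices, so `x` is adjacent to every vertex of `P` whose
substar contains `X = c(x)`, in particular to every vertex of `P` in `C_X`. As `P` is longest and
avoids `x`, `x` sees neither end of `P` nor both ends of an edge of `P`. Hence a vertex `z` of `P`
in `C_X` is interior, and each of its two neighbours on `P` meets `S_z` in a leaf outside `S_x`,
which must be the unique neighbour `Y` of `X` missing from `S_x`. Two such vertices `z, z'` would
let `P` be rerouted through `x`, so there is at most one. Along every other edge of `P` the two
substars meet away from `X`, so all the centres stay in one component of `T - X`: that of `Y`.
If `P` misses `C_X`, `Y` is the first step from `X` towards the centre of an end of `P`.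
-/

namespace SimpleGraph

variable {V τ : Type*} {G : SimpleGraph V} {T : SimpleGraph τ}

/-- In the paper's notation, `z ∈ C^X_Y` reads `T.ReachableAvoiding X Y (center z)`. -/
def ReachableAvoiding (T : SimpleGraph τ) (X s t : τ) : Prop :=
  ∃ w : T.Walk s t, X ∉ w.support

namespace ReachableAvoiding

variable {X s t r : τ}

lemma refl (hs : s ≠ X) : T.ReachableAvoiding X s s :=
  ⟨Walk.nil, by simpa using hs.symm⟩

lemma symm (h : T.ReachableAvoiding X s t) : T.ReachableAvoiding X t s :=
  let ⟨w, hw⟩ := h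
  ⟨w.reverse, by simpa using hw⟩

lemma trans (h₁ : T.ReachableAvoiding X s t) (h₂ : T.ReachableAvoiding X t r) :
    T.ReachableAvoiding X s r :=
  let ⟨w₁, hw₁⟩ := h₁
  let ⟨w₂, hw₂⟩ := h₂
  ⟨w₁.append w₂, by simp [Walk.mem_support_append_iff, hw₁, hw₂]⟩

lemma of_adj (hs : s ≠ X) (ht : t ≠ X) (h : T.Adj s t) : T.ReachableAvoiding X s t :=
  ⟨Walk.cons h Walk.nil, by simp [hs.symm, ht.symm]⟩

end ReachableAvoiding

lemma Connected.exists_adj_reachableAvoiding (hT : T.Connected) {X t : τ} (ht : X ≠ t) :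
    ∃ Y, T.Adj X Y ∧ T.ReachableAvoiding X Y t := by
  obtain ⟨p, hp⟩ := (hT.preconnected X t).exists_isPath
  cases p with
  | nil => exact absurd rfl ht
  | cons h q => exact ⟨_, h, q, ((Walk.cons_isPath_iff h q).1 hp).2⟩

namespace Walk

lemma forall_mem_support_of_darts_iff {u v : V} (p : G.Walk u v) {S : V → Prop}
    (hS : ∀ d ∈ p.darts, (S d.fst ↔ S d.snd)) {r : V} (hr : r ∈ p.support) (h : S r) :
    ∀ s ∈ p.support, S s := by
  induction p generalizing r with
  | nil =>
    rw [support_nil, List.mem_singleton] at hr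
    rintro s hs
    rwa [List.mem_singleton.1 hs, ← hr]
  | cons hadj p ih =>
    simp only [darts_cons, List.mem_cons, forall_eq_or_imp] at hS
    have hp : ∀ s ∈ p.support, S s := by
      rcases List.mem_cons.1 hr with rfl | hr
      · exact ih hS.2 p.start_mem_support (hS.1.1 h)
      · exact ih hS.2 hr h
    rintro s (_ | ⟨_, hs⟩)
    · exact hS.1.2 (hp _ p.start_mem_support)
    · exact hp s hs

lemma exists_eq_append_cons_cons {a b z : V} {p : G.Walk a b} (hz : z ∈ p.support)
    (hza : z ≠ a) (hzb : z ≠ b) :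
    ∃ (u v : V) (A : G.Walk a u) (hu : G.Adj u z) (hv : G.Adj z v) (D : G.Walk v b),
      p = A.append (cons hu (cons hv D)) := by
  obtain ⟨q, r, rfl⟩ := mem_support_iff_exists_append.1 hz
  cases q with
  | nil => exact absurd rfl hza
  | cons h q' =>
    obtain ⟨u, A, hu, hA⟩ := exists_cons_eq_concat h q'
    cases r with
    | nil => exact absurd rfl hzb
    | cons hv D => exact ⟨u, _, A, hu, hv, D, by rw [hA, concat_append]⟩

lemma exists_eq_append_cons_of_mem_darts {a b : V} {p : G.Walk a b} {d : G.Dart}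
    (hd : d ∈ p.darts) :
    ∃ (A : G.Walk a d.fst) (B : G.Walk d.snd b), p = A.append (cons d.adj B) := by
  induction p with
  | nil => simp at hd
  | cons h p ih =>
    rcases List.mem_cons.1 hd with rfl | hd
    · exact ⟨nil, p, rfl⟩
    · obtain ⟨A, B, rfl⟩ := ih hd
      exact ⟨cons h A, B, rfl⟩

end Walk

end SimpleGraph

namespace IsLongestPath

variable {V : Type*} {G : SimpleGraph V} {a b x : V} {P : G.Walk a b}

lemma reverse (hP : IsLongestPath G P) : IsLongestPath G P.reverse :=
  ⟨hP.1.reverse, fun _ _ q hq => P.length_reverse.symm ▸ hP.2 q hq⟩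

lemma not_perm_cons_support (hP : IsLongestPath G P) (hx : x ∉ P.support) {c d : V}
    (q : G.Walk c d) : ¬ q.support.Perm (x :: P.support) := fun hq => by
  have hq_path : q.IsPath :=
    (Walk.isPath_def q).2 (hq.nodup_iff.2 (List.nodup_cons.2 ⟨hx, hP.1.support_nodup⟩))
  have hlen := hq.length_eq
  simp only [Walk.length_support, List.length_cons] at hlen
  have := hP.2 q hq_path
  omega

lemma not_adj_start (hP : IsLongestPath G P) (hx : x ∉ P.support) : ¬ G.Adj x a := fun h =>
  hP.not_perm_cons_support hx (Walk.cons h P) (by rw [Walk.support_cons])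

lemma not_adj_end (hP : IsLongestPath G P) (hx : x ∉ P.support) : ¬ G.Adj x b :=
  hP.reverse.not_adj_start (by simpa using hx)

lemma not_adj_and_adj_of_mem_darts (hP : IsLongestPath G P) (hx : x ∉ P.support)
    {d : G.Dart} (hd : d ∈ P.darts) : ¬ (G.Adj x d.fst ∧ G.Adj x d.snd) := by
  rintro ⟨h₁, h₂⟩
  obtain ⟨A, B, rfl⟩ := Walk.exists_eq_append_cons_of_mem_darts hd
  refine hP.not_perm_cons_support hx (A.append (Walk.cons h₁.symm (Walk.cons h₂ B))) ?_
  simp only [Walk.support_append, Walk.support_cons, List.tail_cons]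
  exact List.perm_middle

/-- If `x` is adjacent to `z` and `z'`, the path `a ⋯ u v ⋯ u' z x z' v' ⋯ b` would be longer. -/
lemma not_adj_and_adj_of_adj_of_adj {u z v u' z' v' : V} {A : G.Walk a u} {hu : G.Adj u z}
    {hv : G.Adj z v} {B : G.Walk v u'} {hu' : G.Adj u' z'} {hv' : G.Adj z' v'}
    {C : G.Walk v' b}
    (hP : IsLongestPath G (A.append (.cons hu (.cons hv (B.append (.cons hu' (.cons hv' C)))))))
    (hx : x ∉ (A.append (.cons hu (.cons hv (B.append (.cons hu' (.cons hv' C)))))).support)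
    (hxz : G.Adj x z) (hxz' : G.Adj x z') : ¬ (G.Adj u v ∧ G.Adj u' z) := by
  rintro ⟨huv, hu'z⟩
  refine hP.not_perm_cons_support hx (A.append (.cons huv (B.append
    (.cons hu'z (.cons hxz.symm (.cons hxz' (.cons hv' C))))))) ?_
  simp only [Walk.support_append, Walk.support_cons, List.tail_cons]
  rw [← Multiset.coe_eq_coe]
  simp only [← Multiset.cons_coe, ← Multiset.coe_add, ← Multiset.singleton_add]
  abel

end IsLongestPath

namespace SubstarModel

variable {V τ : Type*} {G : SimpleGraph V} {T : SimpleGraph τ} (M : SubstarModel G T)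

/-- `V(S_x)`. -/
abbrev nodes (x : V) : Set τ := insert (M.center x) (M.leaves x)

variable {M}

lemma adj_of_mem_nodes {y z : V} {W : τ} (hyz : y ≠ z) (hy : W ∈ M.nodes y)
    (hz : W ∈ M.nodes z) : G.Adj y z :=
  (M.adj_iff y z).2 ⟨hyz, W, hy, hz⟩

lemma adj_of_center_eq {y z : V} (hyz : y ≠ z) (h : M.center y = M.center z) : G.Adj y z :=
  adj_of_mem_nodes hyz (Set.mem_insert _ _) (Set.mem_insert_iff.2 (.inl h))

lemma eq_of_notMem_leaves [Finite τ] {x : V} {W W' : τ} (hW : T.Adj (M.center x) W)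
    (hW' : T.Adj (M.center x) W') (hWx : W ∉ M.leaves x) (hW'x : W' ∉ M.leaves x) :
    W = W' := by
  have hfin : (T.neighborSet (M.center x)).Finite := Set.toFinite _
  have hdiff : (T.neighborSet (M.center x) \ M.leaves x).ncard ≤ 1 := by
    rw [Set.ncard_sdiff (M.leaves_sub x) (hfin.subset (M.leaves_sub x))]
    have := M.leaves_card x
    omega
  exact (Set.ncard_le_one hfin.sdiff).1 hdiff W ⟨hW, hWx⟩ W' ⟨hW', hW'x⟩

lemma exists_mem_nodes_of_not_adj {x z w : V} (hzc : M.center z = M.center x) (hwx : w ≠ x)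
    (hzw : G.Adj z w) (hxw : ¬ G.Adj x w) :
    ∃ W ∈ M.nodes w, W ∈ M.leaves z ∧ T.Adj (M.center x) W ∧ W ∉ M.leaves x := by
  obtain ⟨-, W, hWz, hWw⟩ := (M.adj_iff z w).1 hzw
  have hWx : W ∉ M.nodes x := fun h => hxw (adj_of_mem_nodes hwx.symm h hWw)
  have hWz' : W ∈ M.leaves z :=
    (Set.mem_insert_iff.1 hWz).resolve_left fun h => hWx (h ▸ hzc ▸ Set.mem_insert _ _)
  exact ⟨W, hWw, hWz', hzc ▸ M.leaves_sub z hWz', fun h => hWx (Set.mem_insert_of_mem _ h)⟩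

lemma mem_nodes_of_not_adj [Finite τ] {x z w : V} {Y : τ} (hY : T.Adj (M.center x) Y)
    (hYx : Y ∉ M.leaves x) (hzc : M.center z = M.center x) (hwx : w ≠ x) (hzw : G.Adj z w)
    (hxw : ¬ G.Adj x w) : Y ∈ M.nodes w ∧ Y ∈ M.leaves z := by
  obtain ⟨W, hWw, hWz, hW, hWx⟩ := exists_mem_nodes_of_not_adj hzc hwx hzw hxw
  obtain rfl := eq_of_notMem_leaves hW hY hWx hYx
  exact ⟨hWw, hWz⟩

lemma reachableAvoiding_of_mem_nodes {w : V} {X W : τ} (hW : W ∈ M.nodes w)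
    (hwX : M.center w ≠ X) (hWX : W ≠ X) : T.ReachableAvoiding X (M.center w) W := by
  rcases Set.mem_insert_iff.1 hW with rfl | hW
  · exact .refl hwX
  · exact .of_adj hwX hWX (M.leaves_sub w hW)

lemma reachableAvoiding_center_of_adj {w₁ w₂ : V} {X : τ} (hadj : G.Adj w₁ w₂)
    (h₁ : M.center w₁ ≠ X) (h₂ : M.center w₂ ≠ X) (hX : ¬ (X ∈ M.nodes w₁ ∧ X ∈ M.nodes w₂)) :
    T.ReachableAvoiding X (M.center w₁) (M.center w₂) := by
  obtain ⟨-, W, hW₁, hW₂⟩ := (M.adj_iff w₁ w₂).1 hadj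
  have hWX : W ≠ X := by rintro rfl; exact hX ⟨hW₁, hW₂⟩
  exact (reachableAvoiding_of_mem_nodes hW₁ h₁ hWX).trans
    (reachableAvoiding_of_mem_nodes hW₂ h₂ hWX).symm

lemma not_center_mem_nodes_and_center_mem_nodes {x w₁ w₂ : V} (h₁ : w₁ ≠ x) (h₂ : w₂ ≠ x)
    (hx : ¬ (G.Adj x w₁ ∧ G.Adj x w₂)) :
    ¬ (M.center x ∈ M.nodes w₁ ∧ M.center x ∈ M.nodes w₂) := fun ⟨hX₁, hX₂⟩ =>
  hx ⟨adj_of_mem_nodes h₁.symm (Set.mem_insert _ _) hX₁,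
    adj_of_mem_nodes h₂.symm (Set.mem_insert _ _) hX₂⟩

lemma reachableAvoiding_or_center_eq_of_adj [Finite τ] {x w₁ w₂ : V} {Y : τ}
    (hY : T.Adj (M.center x) Y) (hYx : Y ∉ M.leaves x) (h₁ : w₁ ≠ x) (h₂ : w₂ ≠ x)
    (hadj : G.Adj w₁ w₂) (hx : ¬ (G.Adj x w₁ ∧ G.Adj x w₂)) :
    T.ReachableAvoiding (M.center x) Y (M.center w₁) ∨ M.center w₁ = M.center x →
      T.ReachableAvoiding (M.center x) Y (M.center w₂) ∨ M.center w₂ = M.center x := by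
  intro hw₁
  by_cases hc₂ : M.center w₂ = M.center x
  · exact .inr hc₂
  refine .inl ?_
  by_cases hc₁ : M.center w₁ = M.center x
  · have hxw₂ : ¬ G.Adj x w₂ := fun h => hx ⟨adj_of_center_eq h₁.symm hc₁.symm, h⟩
    have hYw₂ := (mem_nodes_of_not_adj hY hYx hc₁ h₂ hadj hxw₂).1
    exact (reachableAvoiding_of_mem_nodes hYw₂ hc₂ hY.ne').symm
  · exact (hw₁.resolve_right hc₁).trans <| reachableAvoiding_center_of_adj hadj hc₁ hc₂ <|
      not_center_mem_nodes_and_center_mem_nodes h₁ h₂ hx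

end SubstarModel

namespace IsLongestPath

open SubstarModel

variable {V τ : Type*} {G : SimpleGraph V} {T : SimpleGraph τ} {M : SubstarModel G T}
  {a b x : V} {P : G.Walk a b}

lemma reachableAvoiding_iff_of_mem_darts (hP : IsLongestPath G P) (hx : x ∉ P.support)
    {d : G.Dart} (hd : d ∈ P.darts) (h₁ : M.center d.fst ≠ M.center x)
    (h₂ : M.center d.snd ≠ M.center x) {Y : τ} :
    T.ReachableAvoiding (M.center x) Y (M.center d.fst) ↔
      T.ReachableAvoiding (M.center x) Y (M.center d.snd) :=
  have h := reachableAvoiding_center_of_adj d.adj h₁ h₂ <|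
    not_center_mem_nodes_and_center_mem_nodes
      (fun h => hx (h ▸ P.dart_fst_mem_support_of_mem_darts hd))
      (fun h => hx (h ▸ P.dart_snd_mem_support_of_mem_darts hd))
      (hP.not_adj_and_adj_of_mem_darts hx hd)
  ⟨fun hY => hY.trans h, fun hY => hY.trans h.symm⟩

lemma reachableAvoiding_or_center_eq_iff_of_mem_darts [Finite τ] (hP : IsLongestPath G P)
    (hx : x ∉ P.support) {Y : τ} (hY : T.Adj (M.center x) Y) (hYx : Y ∉ M.leaves x)
    {d : G.Dart} (hd : d ∈ P.darts) :
    (T.ReachableAvoiding (M.center x) Y (M.center d.fst) ∨ M.center d.fst = M.center x) ↔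
      (T.ReachableAvoiding (M.center x) Y (M.center d.snd) ∨ M.center d.snd = M.center x) :=
  have h₁ : d.fst ≠ x := fun h => hx (h ▸ P.dart_fst_mem_support_of_mem_darts hd)
  have h₂ : d.snd ≠ x := fun h => hx (h ▸ P.dart_snd_mem_support_of_mem_darts hd)
  have hxd := hP.not_adj_and_adj_of_mem_darts hx hd
  ⟨reachableAvoiding_or_center_eq_of_adj hY hYx h₁ h₂ d.adj hxd,
    reachableAvoiding_or_center_eq_of_adj hY hYx h₂ h₁ d.adj.symm (hxd ∘ And.symm)⟩

lemma exists_adj_notMem_leaves (hP : IsLongestPath G P) (hx : x ∉ P.support) {z : V}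
    (hz : z ∈ P.support) (hzc : M.center z = M.center x) :
    ∃ Y, T.Adj (M.center x) Y ∧ Y ∉ M.leaves x := by
  have hxz : G.Adj x z := adj_of_center_eq (fun h => hx (h ▸ hz)) hzc.symm
  obtain ⟨u, v, A, hu, hv, D, rfl⟩ := Walk.exists_eq_append_cons_cons hz
    (fun h => hP.not_adj_start hx (h ▸ hxz)) (fun h => hP.not_adj_end hx (h ▸ hxz))
  obtain ⟨Y, -, -, hY, hYx⟩ := exists_mem_nodes_of_not_adj hzc
    (fun h => hx (by simp [Walk.support_append, ← h])) hv
    (fun h => hP.not_adj_and_adj_of_mem_darts hx (d := ⟨(z, v), hv⟩) (by simp) ⟨hxz, h⟩)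
  exact ⟨Y, hY, hYx⟩

lemma center_ne_of_mem_support_after [Finite τ] {u z v : V} {A : G.Walk a u}
    {hu : G.Adj u z} {hv : G.Adj z v} {D : G.Walk v b}
    (hP : IsLongestPath G (A.append (.cons hu (.cons hv D))))
    (hx : x ∉ (A.append (.cons hu (.cons hv D))).support) (hzc : M.center z = M.center x)
    {z' : V} (hz' : z' ∈ D.support) : M.center z' ≠ M.center x := by
  intro hz'c
  have hne : ∀ w ∈ (A.append (.cons hu (.cons hv D))).support, w ≠ x :=
    fun w hw h => hx (h ▸ hw)
  have hxz : G.Adj x z := adj_of_center_eq (hne z (by simp [Walk.support_append])).symm hzc.symm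
  have hxz' : G.Adj x z' :=
    adj_of_center_eq (hne z' (by simp [Walk.support_append, hz'])).symm hz'c.symm
  have hz'v : z' ≠ v := by
    rintro rfl
    exact hP.not_adj_and_adj_of_mem_darts hx (d := ⟨(z, z'), hv⟩) (by simp) ⟨hxz, hxz'⟩
  obtain ⟨u', v', B, hu', hv', C, rfl⟩ :=
    Walk.exists_eq_append_cons_cons hz' hz'v (fun h => hP.not_adj_end hx (h ▸ hxz'))
  have hxd := fun d hd => hP.not_adj_and_adj_of_mem_darts hx (d := d) hd
  obtain ⟨Y, hYu, hYz, hY, hYx⟩ := exists_mem_nodes_of_not_adj hzc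
    (hne u (by simp [Walk.support_append])) hu.symm
    (fun h => hxd ⟨(u, z), hu⟩ (by simp) ⟨h, hxz⟩)
  have hYv := (mem_nodes_of_not_adj hY hYx hzc (hne v (by simp [Walk.support_append])) hv
    (fun h => hxd ⟨(z, v), hv⟩ (by simp) ⟨hxz, h⟩)).1
  have hYu' := (mem_nodes_of_not_adj hY hYx hz'c (hne u' (by simp [Walk.support_append]))
    hu'.symm (fun h => hxd ⟨(u', z'), hu'⟩ (by simp) ⟨h, hxz'⟩)).1
  have hu_path := (Walk.cons_isPath_iff _ _).1 hP.1.of_append_right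
  have hz_path := (Walk.cons_isPath_iff _ _).1 hu_path.1
  refine hP.not_adj_and_adj_of_adj_of_adj hx hxz hxz'
    ⟨adj_of_mem_nodes ?_ hYu hYv, adj_of_mem_nodes ?_ hYu' (Set.mem_insert_of_mem _ hYz)⟩
  · exact fun h => hu_path.2 (by simp [h, Walk.support_append])
  · exact fun h => hz_path.2 (by simp [← h, Walk.support_append])

lemma eq_of_center_eq [Finite τ] (hP : IsLongestPath G P)
    (hx : x ∉ P.support) {z z' : V} (hz : z ∈ P.support) (hz' : z' ∈ P.support)
    (hzc : M.center z = M.center x) (hz'c : M.center z' = M.center x) : z = z' := by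
  have hxz : G.Adj x z := adj_of_center_eq (fun h => hx (h ▸ hz)) hzc.symm
  obtain ⟨u, v, A, hu, hv, D, rfl⟩ := Walk.exists_eq_append_cons_cons hz
    (fun h => hP.not_adj_start hx (h ▸ hxz)) (fun h => hP.not_adj_end hx (h ▸ hxz))
  simp only [Walk.support_append, Walk.support_cons, List.tail_cons, List.mem_append,
    List.mem_cons] at hz'
  rcases hz' with hz' | rfl | hz'
  · have hrev : (A.append (.cons hu (.cons hv D))).reverse =
        D.reverse.append (.cons hv.symm (.cons hu.symm A.reverse)) := by
      simp only [Walk.reverse_append, Walk.reverse_cons, ← Walk.append_assoc, Walk.cons_append,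
        Walk.nil_append]
    have hP' := hP.reverse
    rw [hrev] at hP'
    exact absurd hz'c (center_ne_of_mem_support_after hP'
      (by rwa [← hrev, Walk.support_reverse, List.mem_reverse]) hzc (by simpa using hz'))
  · rfl
  · exact absurd hz'c (center_ne_of_mem_support_after hP hx hzc hz')

end IsLongestPath

theorem avoided_vertex_branch_general {V τ : Type*} [Fintype τ]
    (G : SimpleGraph V) (T : SimpleGraph τ) (M : SubstarModel G T)
    (x : V) ⦃a b : V⦄ (P : G.Walk a b)
    (hP : IsLongestPath G P) (hx : x ∉ P.support) :
    ∃ Y : τ, T.Adj (M.center x) Y ∧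
      (∀ z ∈ P.support,
        (∃ w : T.Walk Y (M.center z), M.center x ∉ w.support) ∨ M.center z = M.center x) ∧
      {z : V | z ∈ P.support ∧ M.center z = M.center x}.ncard ≤ 1 ∧
      ({z : V | z ∈ P.support ∧ M.center z = M.center x}.ncard = 1 →
        Y ∉ insert (M.center x) (M.leaves x)) := by
  suffices ∃ Y, T.Adj (M.center x) Y ∧
      (∀ z ∈ P.support, T.ReachableAvoiding (M.center x) Y (M.center z) ∨
        M.center z = M.center x) ∧
      ((∃ z ∈ P.support, M.center z = M.center x) → Y ∉ M.nodes x) by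
    obtain ⟨Y, hY, hbranch, hYx⟩ := this
    refine ⟨Y, hY, hbranch, ?_, fun h => hYx ?_⟩
    · exact (Set.ncard_le_one (P.support.finite_toSet.subset fun _ h => h.1)).2
        fun z hz z' hz' => hP.eq_of_center_eq hx hz.1 hz'.1 hz.2 hz'.2
    · exact Set.nonempty_of_ncard_ne_zero (h ▸ one_ne_zero)
  by_cases hex : ∃ z ∈ P.support, M.center z = M.center x
  · obtain ⟨z, hz, hzc⟩ := hex
    obtain ⟨Y, hY, hYx⟩ := hP.exists_adj_notMem_leaves hx hz hzc
    refine ⟨Y, hY, P.forall_mem_support_of_darts_iff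
      (fun d hd => hP.reachableAvoiding_or_center_eq_iff_of_mem_darts hx hY hYx hd) hz
      (.inr hzc), fun _ => ?_⟩
    exact fun h => (Set.mem_insert_iff.1 h).elim hY.ne' hYx
  · simp only [not_exists, not_and] at hex
    obtain ⟨Y, hY, hYa⟩ := M.isTree.connected.exists_adj_reachableAvoiding
      (fun h => hex a P.start_mem_support h.symm)
    refine ⟨Y, hY, fun z hz => .inl ?_, fun ⟨z, hz, hzc⟩ => absurd hzc (hex z hz)⟩
    exact P.forall_mem_support_of_darts_iff
      (S := fun r => T.ReachableAvoiding (M.center x) Y (M.center r))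
      (fun d hd => hP.reachableAvoiding_iff_of_mem_darts hx hd
        (hex _ (P.dart_fst_mem_support_of_mem_darts hd))
        (hex _ (P.dart_snd_mem_support_of_mem_darts hd)))
      P.start_mem_support hYa z hz

/-- For a finite full substar graph `G` with host tree `T`, a vertex `x` of `G` with
center `X = center x`, and a longest path `P` avoiding `x`: there is a neighbor `Y` of
`X` in `T` such that (i) every vertex of `P` either has its substar centered in the
component of `T - X` containing `Y` (i.e. lies in `C^X_Y`) or centered at `X` itself
(i.e. lies in `C_X`); (ii) at most one vertex of `P` lies in `C_X`; and moreover, if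
exactly one vertex of `P` lies in `C_X`, then `Y` is not a node of the substar of `x`. -/
theorem avoided_vertex_branch {V τ : Type*} [Fintype V] [Fintype τ]
    (G : SimpleGraph V) (T : SimpleGraph τ) (M : SubstarModel G T)
    (x : V) ⦃a b : V⦄ (P : G.Walk a b)
    (hP : IsLongestPath G P) (hx : x ∉ P.support) :
    ∃ Y : τ, T.Adj (M.center x) Y ∧
      (∀ z ∈ P.support,
        (∃ w : T.Walk Y (M.center z), M.center x ∉ w.support) ∨ M.center z = M.center x) ∧
      {z : V | z ∈ P.support ∧ M.center z = M.center x}.ncard ≤ 1 ∧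
      ({z : V | z ∈ P.support ∧ M.center z = M.center x}.ncard = 1 →
        Y ∉ insert (M.center x) (M.leaves x)) :=
  avoided_vertex_branch_general G T M x (a := a) (b := b) P hP hx
end
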